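/- Let T : H^∞_1(𝔻) → H^∞_1(𝔻) be a map. Then T is an automorphism if and only if there exists θ ∈ ℝ such that (Tf)(z) = f(e^{iθ} z) for all f ∈ H^∞_1(𝔻) and all z ∈ 𝔻. -/

import Mathlib

open Set Metric Complex MeasureTheory Filter

noncomputable section

/-- The open unit disc in `ℂ`. -/
def D : Set ℂ := Metric.ball (0 : ℂ) 1

/-- `H^∞(𝔻)`: bounded analytic functions on the open unit disc.  Functions are represented by
their values on `ℂ`; only the values on `D` are relevant, and two representatives are
identified when they agree on `D`. -/
def Hinf : Set (ℂ → ℂ) :=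
  {f | DifferentiableOn ℂ f D ∧ ∃ C : ℝ, ∀ z ∈ D, ‖f z‖ ≤ C}

/-- `H^∞_0(𝔻) = {f ∈ H^∞(𝔻) : f 0 = 0}`. -/
def Hinf0 : Set (ℂ → ℂ) := {f | f ∈ Hinf ∧ f 0 = 0}

/-- The Neil algebra `H^∞_1(𝔻) = {f ∈ H^∞(𝔻) : f'(0) = 0}`. -/
def Hinf1 : Set (ℂ → ℂ) := {f | f ∈ Hinf ∧ deriv f 0 = 0}

/-- `T` is an automorphism (bijective ℂ-linear multiplicative map) of the algebra of
holomorphic functions `A`, where two functions are identified when they agree on `D`. -/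
def IsAlgAutOn (A : Set (ℂ → ℂ)) (T : (ℂ → ℂ) → (ℂ → ℂ)) : Prop :=
  (∀ f ∈ A, T f ∈ A) ∧
  (∀ f ∈ A, ∀ g ∈ A, Set.EqOn f g D → Set.EqOn (T f) (T g) D) ∧
  (∀ f ∈ A, ∀ g ∈ A, Set.EqOn (T (f + g)) (T f + T g) D) ∧
  (∀ (c : ℂ), ∀ f ∈ A, Set.EqOn (T (c • f)) (c • T f) D) ∧
  (∀ f ∈ A, ∀ g ∈ A, Set.EqOn (T (f * g)) (T f * T g) D) ∧
  (∀ f ∈ A, ∀ g ∈ A, Set.EqOn (T f) (T g) D → Set.EqOn f g D) ∧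
  (∀ g ∈ A, ∃ f ∈ A, Set.EqOn (T f) g D)

/-- A function in `H^∞(𝔻)` is inner if its radial boundary values have modulus one at almost
every boundary point. -/
def IsInner (φ : ℂ → ℂ) : Prop :=
  φ ∈ Hinf ∧ ∀ᵐ (θ : ℝ) ∂(volume : Measure ℝ),
    Filter.Tendsto (fun r : ℝ => ‖φ ((r : ℂ) * Complex.exp ((θ : ℂ) * Complex.I))‖)
      (nhdsWithin 1 (Set.Iio 1)) (nhds 1)

/-- A conformal automorphism of the unit disc: a bijective holomorphic self-map of `D`. -/
def IsConfAut (τ : ℂ → ℂ) : Prop := DifferentiableOn ℂ τ D ∧ Set.BijOn τ D D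

def Complex.abs : AbsoluteValue ℂ ℝ where
  toFun x := ‖x‖
  map_mul' := norm_mul
  nonneg' := norm_nonneg
  eq_zero' _ := norm_eq_zero
  add_le' := norm_add_le

lemma Complex.norm_eq_abs (z : ℂ) : ‖z‖ = Complex.abs z := rfl

lemma Complex.continuous_abs : Continuous Complex.abs := continuous_norm

lemma Complex.abs_le_abs_of_mapsTo_ball_self {f : ℂ → ℂ} {R : ℝ} {z : ℂ}
    (hd : DifferentiableOn ℂ f (ball 0 R)) (h_maps : MapsTo f (ball 0 R) (ball 0 R))
    (h₀ : f 0 = 0) (hz : Complex.abs z < R) : Complex.abs (f z) ≤ Complex.abs z :=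
  Complex.norm_le_norm_of_mapsTo_ball hd (h_maps.mono_right ball_subset_closedBall) h₀ hz

lemma Complex.abs_mul_exp_arg_mul_I (x : ℂ) :
    ↑(Complex.abs x) * Complex.exp (Complex.arg x * Complex.I) = x :=
  Complex.norm_mul_exp_arg_mul_I x

lemma Complex.abs_exp_ofReal_mul_I (x : ℝ) : Complex.abs (Complex.exp (x * Complex.I)) = 1 :=
  Complex.norm_exp_ofReal_mul_I x

lemma D_open : IsOpen D := isOpen_ball
lemma D_conn : IsPreconnected D := (convex_ball _ _).isPreconnected
lemma zero_mem_D : (0:ℂ) ∈ D := by simp [D]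
lemma mem_D {z : ℂ} : z ∈ D ↔ Complex.abs z < 1 := by
  simp [D, mem_ball_zero_iff]; rfl

lemma Hinf_diffAt {f : ℂ → ℂ} (hf : f ∈ Hinf) {z : ℂ} (hz : z ∈ D) :
    DifferentiableAt ℂ f z := hf.1.differentiableAt (D_open.mem_nhds hz)

lemma Hinf1.diffAt {f : ℂ → ℂ} (hf : f ∈ Hinf1) {z : ℂ} (hz : z ∈ D) :
    DifferentiableAt ℂ f z := Hinf_diffAt hf.1 hz

lemma const_mem (c : ℂ) : (fun _ : ℂ => c) ∈ Hinf1 := by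
  refine ⟨⟨differentiableOn_const c, Complex.abs c, fun z _ => le_rfl⟩, deriv_const 0 c⟩

lemma one_mem' : (1 : ℂ → ℂ) ∈ Hinf1 := const_mem 1

lemma zero_mem' : (0 : ℂ → ℂ) ∈ Hinf1 := const_mem 0

lemma add_mem' {f g : ℂ → ℂ} (hf : f ∈ Hinf1) (hg : g ∈ Hinf1) : f + g ∈ Hinf1 := by
  obtain ⟨⟨hfd, Cf, hCf⟩, hf0⟩ := hf
  obtain ⟨⟨hgd, Cg, hCg⟩, hg0⟩ := hg
  refine ⟨⟨hfd.add hgd, Cf + Cg, fun z hz => ?_⟩, ?_⟩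
  · exact le_trans (Complex.abs.add_le _ _) (add_le_add (hCf z hz) (hCg z hz))
  · have := deriv_add (hfd.differentiableAt (D_open.mem_nhds zero_mem_D))
      (hgd.differentiableAt (D_open.mem_nhds zero_mem_D))
    simpa [hf0, hg0] using this

lemma smul_mem' (c : ℂ) {f : ℂ → ℂ} (hf : f ∈ Hinf1) : c • f ∈ Hinf1 := by
  obtain ⟨⟨hfd, Cf, hCf⟩, hf0⟩ := hf
  refine ⟨⟨hfd.const_smul c, Complex.abs c * Cf, fun z hz => ?_⟩, ?_⟩
  · have : Complex.abs (c * f z) = Complex.abs c * Complex.abs (f z) := map_mul _ _ _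
    simpa [this, Complex.norm_eq_abs] using mul_le_mul_of_nonneg_left (hCf z hz) (Complex.abs.nonneg c)
  · have hd : deriv (c • f) 0 = c • deriv f 0 :=
      deriv_const_smul c (hfd.differentiableAt (D_open.mem_nhds zero_mem_D))
    simp [hd, hf0]

lemma mul_mem' {f g : ℂ → ℂ} (hf : f ∈ Hinf1) (hg : g ∈ Hinf1) : f * g ∈ Hinf1 := by
  obtain ⟨⟨hfd, Cf, hCf⟩, hf0⟩ := hf
  obtain ⟨⟨hgd, Cg, hCg⟩, hg0⟩ := hg
  have hCf0 : 0 ≤ Cf := le_trans (Complex.abs.nonneg _) (hCf 0 zero_mem_D)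
  refine ⟨⟨hfd.mul hgd, Cf * Cg, fun z hz => ?_⟩, ?_⟩
  · calc Complex.abs (f z * g z) = Complex.abs (f z) * Complex.abs (g z) := map_mul _ _ _
      _ ≤ Cf * Cg := mul_le_mul (hCf z hz) (hCg z hz) (Complex.abs.nonneg _) hCf0
  · have := deriv_fun_mul (hfd.differentiableAt (D_open.mem_nhds zero_mem_D))
      (hgd.differentiableAt (D_open.mem_nhds zero_mem_D))
    have h2 : deriv (f * g) 0 = deriv (fun z => f z * g z) 0 := rfl
    simp [h2, this, hf0, hg0]

lemma sub_mem' {f g : ℂ → ℂ} (hf : f ∈ Hinf1) (hg : g ∈ Hinf1) : f - g ∈ Hinf1 := by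
  have : f - g = f + (-1 : ℂ) • g := by
    funext z; simp [sub_eq_add_neg]
  rw [this]; exact add_mem' hf (smul_mem' _ hg)

def NAq2 : ℂ → ℂ := fun z => z ^ 2
def NAq3 : ℂ → ℂ := fun z => z ^ 3

lemma q2_mem : NAq2 ∈ Hinf1 := by
  refine ⟨⟨?_, 1, fun z hz => ?_⟩, ?_⟩
  · exact (differentiable_pow 2).differentiableOn
  · have : Complex.abs z < 1 := mem_D.1 hz
    have := pow_le_one₀ (Complex.abs.nonneg z) this.le (n := 2)
    simpa [NAq2, map_pow, Complex.norm_eq_abs] using this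
  · show deriv (fun z : ℂ => z ^ 2) 0 = 0
    rw [deriv_pow_field]; norm_num

lemma q3_mem : NAq3 ∈ Hinf1 := by
  refine ⟨⟨?_, 1, fun z hz => ?_⟩, ?_⟩
  · exact (differentiable_pow 3).differentiableOn
  · have : Complex.abs z < 1 := mem_D.1 hz
    have := pow_le_one₀ (Complex.abs.nonneg z) this.le (n := 3)
    simpa [NAq3, map_pow, Complex.norm_eq_abs] using this
  · show deriv (fun z : ℂ => z ^ 3) 0 = 0
    rw [deriv_pow_field]; norm_num

lemma q2_mul_mem {h : ℂ → ℂ} (hh : h ∈ Hinf) : NAq2 * h ∈ Hinf1 := by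
  obtain ⟨hhd, C, hC⟩ := hh
  refine ⟨⟨((differentiable_pow 2).differentiableOn : DifferentiableOn ℂ NAq2 D).mul hhd,
    C, fun z hz => ?_⟩, ?_⟩
  · have h1 : Complex.abs z < 1 := mem_D.1 hz
    have hC0 : 0 ≤ C := le_trans (Complex.abs.nonneg _) (hC 0 zero_mem_D)
    calc Complex.abs (NAq2 z * h z) = Complex.abs z ^ 2 * Complex.abs (h z) := by
          simp [NAq2, map_mul, map_pow]
      _ ≤ 1 * C := mul_le_mul (pow_le_one₀ (Complex.abs.nonneg z) h1.le) (hC z hz)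
          (Complex.abs.nonneg _) one_pos.le
      _ = C := one_mul C
  · have hd2 : DifferentiableAt ℂ NAq2 0 := (differentiable_pow 2).differentiableAt
    have hdh : DifferentiableAt ℂ h 0 := hhd.differentiableAt (D_open.mem_nhds zero_mem_D)
    have := deriv_fun_mul hd2 hdh
    have h2 : deriv (NAq2 * h) 0 = deriv (fun z => NAq2 z * h z) 0 := rfl
    have hq : deriv NAq2 0 = 0 := by
      show deriv (fun z : ℂ => z ^ 2) 0 = 0
      rw [deriv_pow_field]; norm_num
    rw [h2]
    have h3 : (fun z => NAq2 z * h z) = fun y => NAq2 y * h y := rfl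
    rw [h3, this, hq]
    simp [NAq2]

lemma dslope_mem {f : ℂ → ℂ} (hf : f ∈ Hinf) {a : ℂ} (ha : a ∈ D) : dslope f a ∈ Hinf := by
  obtain ⟨hfd, C, hC⟩ := hf
  have hC0 : 0 ≤ C := le_trans (Complex.abs.nonneg _) (hC 0 zero_mem_D)
  have hr : (0:ℝ) < 1 - Complex.abs a := by
    have := mem_D.1 ha; linarith
  set r : ℝ := 1 - Complex.abs a with hrdef
  have hball : ball a r ⊆ D := by
    intro z hz
    rw [mem_ball, dist_eq_norm] at hz
    rw [mem_D]
    calc Complex.abs z = Complex.abs (z - a + a) := by ring_nf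
      _ ≤ Complex.abs (z - a) + Complex.abs a := Complex.abs.add_le _ _
      _ < r + Complex.abs a := by
          gcongr
          simpa [Complex.norm_eq_abs] using hz
      _ = 1 := by rw [hrdef]; ring
  constructor
  · exact (differentiableOn_dslope (D_open.mem_nhds ha)).mpr hfd
  · refine ⟨(2 * C + 1) / r, fun z hz => ?_⟩
    by_cases hzb : z ∈ ball a r
    · have hmaps : MapsTo f (ball a r) (ball (f a) (2 * C + 1)) := by
        intro x hx
        rw [mem_ball, dist_eq_norm]
        have h1 : Complex.abs (f x - f a) ≤ 2 * C := by
          calc Complex.abs (f x - f a) ≤ Complex.abs (f x) + Complex.abs (f a) :=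
                Complex.abs.sub_le_add _ _
            _ ≤ C + C := add_le_add (hC x (hball hx)) (hC a ha)
            _ = 2 * C := by ring
        calc ‖f x - f a‖ = Complex.abs (f x - f a) := rfl
          _ ≤ 2 * C := h1
          _ < 2 * C + 1 := by linarith
      have := Complex.norm_dslope_le_div_of_mapsTo_ball (hfd.mono hball) (hmaps.mono_right ball_subset_closedBall) hzb
      simpa [Complex.norm_eq_abs] using this
    · have hza : z ≠ a := by
        intro h; exact hzb (h ▸ mem_ball_self hr)
      rw [dslope_of_ne f hza, slope_def_field]
      have hzar : r ≤ Complex.abs (z - a) := by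
        rw [mem_ball, dist_eq_norm] at hzb
        push_neg at hzb
        simpa [Complex.norm_eq_abs] using hzb
      have hnum : Complex.abs (f z - f a) ≤ 2 * C := by
        calc Complex.abs (f z - f a) ≤ Complex.abs (f z) + Complex.abs (f a) :=
              Complex.abs.sub_le_add _ _
          _ ≤ C + C := add_le_add (hC z hz) (hC a ha)
          _ = 2 * C := by ring
      rw [Complex.norm_eq_abs, map_div₀]
      calc Complex.abs (f z - f a) / Complex.abs (z - a) ≤ (2 * C) / r :=
            div_le_div₀ (by linarith) hnum hr hzar
        _ ≤ (2 * C + 1) / r := by gcongr <;> linarith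

section Tlem

variable {T : (ℂ → ℂ) → (ℂ → ℂ)} (hT : IsAlgAutOn Hinf1 T)
include hT

lemma T_mem {f : ℂ → ℂ} (hf : f ∈ Hinf1) : T f ∈ Hinf1 := hT.1 f hf

lemma T_add {f g : ℂ → ℂ} (hf : f ∈ Hinf1) (hg : g ∈ Hinf1) {z : ℂ} (hz : z ∈ D) :
    T (f + g) z = T f z + T g z := hT.2.2.1 f hf g hg hz

lemma T_smul (c : ℂ) {f : ℂ → ℂ} (hf : f ∈ Hinf1) {z : ℂ} (hz : z ∈ D) :
    T (c • f) z = c * T f z := hT.2.2.2.1 c f hf hz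

lemma T_mul {f g : ℂ → ℂ} (hf : f ∈ Hinf1) (hg : g ∈ Hinf1) {z : ℂ} (hz : z ∈ D) :
    T (f * g) z = T f z * T g z := hT.2.2.2.2.1 f hf g hg hz

lemma T_zero {z : ℂ} (hz : z ∈ D) : T 0 z = 0 := by
  have h := T_add hT zero_mem' zero_mem' hz
  rw [add_zero (0 : ℂ → ℂ)] at h
  linear_combination -h

lemma T_one {z : ℂ} (hz : z ∈ D) : T 1 z = 1 := by
  obtain ⟨f, hf, hTf⟩ := hT.2.2.2.2.2.2 1 one_mem'
  have h := T_mul hT hf one_mem' hz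
  rw [mul_one f] at h
  have h1 : T f z = (1 : ℂ) := hTf hz
  rw [h1] at h
  linear_combination -h

lemma T_const (c : ℂ) {z : ℂ} (hz : z ∈ D) : T (fun _ => c) z = c := by
  have hc : (fun _ : ℂ => c) = c • (1 : ℂ → ℂ) := by funext w; simp
  rw [hc, T_smul hT c one_mem' hz, T_one hT hz, mul_one]

lemma T_sub {f g : ℂ → ℂ} (hf : f ∈ Hinf1) (hg : g ∈ Hinf1) {z : ℂ} (hz : z ∈ D) :
    T (f - g) z = T f z - T g z := by
  have e : f - g = f + (-1 : ℂ) • g := by funext w; simp [sub_eq_add_neg]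
  rw [e, T_add hT hf (smul_mem' _ hg) hz, T_smul hT _ hg hz]
  ring

lemma char_bound {f : ℂ → ℂ} (hf : f ∈ Hinf1) {C : ℝ} (hC : ∀ z ∈ D, Complex.abs (f z) ≤ C)
    {w : ℂ} (hw : w ∈ D) : Complex.abs (T f w) ≤ C := by
  by_contra hcon
  push_neg at hcon
  set c : ℂ := T f w with hc
  have hC0 : 0 ≤ C := le_trans (Complex.abs.nonneg _) (hC 0 zero_mem_D)
  have hc0 : c ≠ 0 := by
    intro h; rw [h] at hcon; simp at hcon; linarith
  set g : ℂ → ℂ := (fun _ => (1:ℂ)) + (-c⁻¹) • f with hg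
  have hgmem : g ∈ Hinf1 := add_mem' (const_mem 1) (smul_mem' _ hf)
  have hgval : ∀ z, g z = 1 - f z / c := by
    intro z; simp [hg, div_eq_inv_mul]; ring
  have habsc : 0 < Complex.abs c := Complex.abs.pos hc0
  set δ : ℝ := 1 - C / Complex.abs c with hδ
  have hδ0 : 0 < δ := by
    rw [hδ]
    have : C / Complex.abs c < 1 := (div_lt_one habsc).mpr hcon
    linarith
  have hglb : ∀ z ∈ D, δ ≤ Complex.abs (g z) := by
    intro z hz
    rw [hgval z]
    have h1 : Complex.abs (f z / c) ≤ C / Complex.abs c := by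
      rw [map_div₀]
      exact div_le_div_of_nonneg_right (hC z hz) habsc.le
    calc δ = 1 - C / Complex.abs c := rfl
      _ ≤ 1 - Complex.abs (f z / c) := by linarith
      _ ≤ Complex.abs (1 - f z / c) := by
          have h2 := Complex.abs.add_le (1 - f z / c) (f z / c)
          rw [sub_add_cancel] at h2
          rw [map_one] at h2
          linarith
  have hgne : ∀ z ∈ D, g z ≠ 0 := by
    intro z hz h0
    have := hglb z hz; rw [h0] at this; simp at this; linarith
  set gi : ℂ → ℂ := fun z => (g z)⁻¹ with hgi
  have hgimem : gi ∈ Hinf1 := by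
    refine ⟨⟨?_, δ⁻¹, fun z hz => ?_⟩, ?_⟩
    · exact DifferentiableOn.inv hgmem.1.1 (fun z hz => hgne z hz)
    · rw [hgi]
      simp only [Complex.norm_eq_abs, map_inv₀]
      exact inv_anti₀ hδ0 (hglb z hz)
    · have hd : DifferentiableAt ℂ g 0 := Hinf1.diffAt hgmem zero_mem_D
      have := deriv_inv'' hd (hgne 0 zero_mem_D)
      rw [hgi]
      have h2 : deriv (fun z => (g z)⁻¹) 0 = -deriv g 0 / g 0 ^ 2 := this
      rw [h2, hgmem.2]
      simp
  have hprod : Set.EqOn (g * gi) 1 D := by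
    intro z hz
    simp only [Pi.mul_apply, Pi.one_apply, hgi]
    exact mul_inv_cancel₀ (hgne z hz)
  have h1 : T (g * gi) w = T 1 w :=
    hT.2.1 (g * gi) (mul_mem' hgmem hgimem) 1 one_mem' hprod hw
  rw [T_one hT hw, T_mul hT hgmem hgimem hw] at h1
  have hgw : T g w = 0 := by
    have := T_add hT (const_mem 1) (smul_mem' (-c⁻¹) hf) hw
    rw [← hg] at this
    rw [this, T_const hT 1 hw, T_smul hT _ hf hw, ← hc]
    field_simp; norm_num
  rw [hgw] at h1
  simp at h1

end Tlem

lemma factor_id (f : ℂ → ℂ) (a : ℂ) :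
    NAq2 * (NAq2 * (f + (-(f a)) • (1 : ℂ → ℂ))) =
      (NAq3 + (-a) • NAq2) * (NAq2 * dslope f a) := by
  funext z
  simp only [Pi.mul_apply, Pi.add_apply, Pi.smul_apply, Pi.one_apply, smul_eq_mul, NAq2, NAq3]
  rcases eq_or_ne z a with rfl | hza
  · ring_nf
  · rw [dslope_of_ne f hza, slope_def_field]
    field_simp [sub_ne_zero.mpr hza]
    ring

section KeyLem

variable {T : (ℂ → ℂ) → (ℂ → ℂ)} (hT : IsAlgAutOn Hinf1 T)
include hT

lemma T_q3_sq {z : ℂ} (hz : z ∈ D) : (T NAq3 z) ^ 2 = (T NAq2 z) ^ 3 := by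
  have e : NAq3 * NAq3 = NAq2 * (NAq2 * NAq2) := by
    funext w; simp only [Pi.mul_apply, NAq2, NAq3]; ring
  have h1 : T (NAq3 * NAq3) z = T NAq3 z * T NAq3 z := T_mul hT q3_mem q3_mem hz
  have h2 : T (NAq2 * (NAq2 * NAq2)) z = T NAq2 z * (T NAq2 z * T NAq2 z) := by
    rw [T_mul hT q2_mem (mul_mem' q2_mem q2_mem) hz, T_mul hT q2_mem q2_mem hz]
  rw [e] at h1
  rw [h1] at h2
  ring_nf
  ring_nf at h2
  linear_combination h2

lemma T_q2_abs_lt {z : ℂ} (hz : z ∈ D) : Complex.abs (T NAq2 z) < 1 := by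
  have hle : ∀ w ∈ D, Complex.abs (T NAq2 w) ≤ 1 := by
    intro w hw
    refine char_bound hT q2_mem (fun x hx => ?_) hw
    have : Complex.abs x < 1 := mem_D.1 hx
    have := pow_le_one₀ (Complex.abs.nonneg x) this.le (n := 2)
    simpa [NAq2, map_pow, Complex.norm_eq_abs] using this
  rcases lt_or_eq_of_le (hle z hz) with h | h
  · exact h
  · exfalso
    -- maximum modulus: T NAq2 is constant on D
    have hdiff : DifferentiableOn ℂ (T NAq2) D := (T_mem hT q2_mem).1.1
    have hmax : IsMaxOn (norm ∘ T NAq2) D z := by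
      intro x hx
      simp only [Function.comp_apply, Complex.norm_eq_abs, Set.mem_setOf_eq]
      rw [h]
      exact hle x hx
    have hconst := Complex.eqOn_of_isPreconnected_of_isMaxOn_norm D_conn D_open hdiff hz hmax
    -- so T NAq2 = const on D; hence NAq2 = const on D by injectivity
    have hc : Set.EqOn (T NAq2) (T (fun _ => T NAq2 z)) D := by
      intro x hx
      rw [hconst hx, T_const hT _ hx]
      rfl
    have := hT.2.2.2.2.2.1 NAq2 q2_mem (fun _ => T NAq2 z) (const_mem _) hc
    have h0 := this zero_mem_D
    have hhalf := this (show (1/2 : ℂ) ∈ D by rw [mem_D, ← Complex.norm_eq_abs]; norm_num)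
    simp only [NAq2] at h0 hhalf
    rw [← h0] at hhalf
    norm_num at hhalf

lemma key_eval {w : ℂ} (hw : w ∈ D) (hu : T NAq2 w ≠ 0) {f : ℂ → ℂ} (hf : f ∈ Hinf1) :
    T f w = f (T NAq3 w / T NAq2 w) := by
  set u := T NAq2 w with hudef
  set v := T NAq3 w with hvdef
  set a : ℂ := v / u with hadef
  have hsq : v ^ 2 = u ^ 3 := T_q3_sq hT hw
  have ha2 : a ^ 2 = u := by
    have h1 : a ^ 2 * u ^ 2 = v ^ 2 := by rw [hadef]; field_simp
    have h2 : a ^ 2 * u ^ 2 = u * u ^ 2 := by rw [h1, hsq]; ring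
    exact mul_right_cancel₀ (pow_ne_zero 2 hu) h2
  have ha3 : a ^ 3 = v := by
    have h1 : a ^ 3 * u ^ 3 = v ^ 3 := by rw [hadef]; field_simp
    have h2 : a ^ 3 * u ^ 3 = v * u ^ 3 := by
      rw [h1]; calc v ^ 3 = v * v ^ 2 := by ring
        _ = v * u ^ 3 := by rw [hsq]
    exact mul_right_cancel₀ (pow_ne_zero 3 hu) h2
  have haD : a ∈ D := by
    rw [mem_D]
    by_contra hcon
    push_neg at hcon
    have h1 : (1:ℝ) ≤ Complex.abs a ^ 2 := one_le_pow₀ hcon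
    rw [← map_pow, ha2] at h1
    exact absurd (T_q2_abs_lt hT hw) (by rw [← hudef]; linarith)
  -- memberships
  have hm0 : f + (-(f a)) • (1 : ℂ → ℂ) ∈ Hinf1 := add_mem' hf (smul_mem' _ one_mem')
  have hm1 : NAq2 * (f + (-(f a)) • (1 : ℂ → ℂ)) ∈ Hinf1 := mul_mem' q2_mem hm0
  have hm2 : NAq3 + (-a) • NAq2 ∈ Hinf1 := add_mem' q3_mem (smul_mem' _ q2_mem)
  have hm3 : NAq2 * dslope f a ∈ Hinf1 := q2_mul_mem (dslope_mem hf.1 haD)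
  have hTeq : T (NAq2 * (NAq2 * (f + (-(f a)) • (1 : ℂ → ℂ)))) w
      = T ((NAq3 + (-a) • NAq2) * (NAq2 * dslope f a)) w := by
    rw [factor_id f a]
  have hL : T (NAq2 * (NAq2 * (f + (-(f a)) • (1 : ℂ → ℂ)))) w
      = u * (u * (T f w - f a)) := by
    rw [T_mul hT q2_mem hm1 hw, T_mul hT q2_mem hm0 hw,
      T_add hT hf (smul_mem' _ one_mem') hw, T_smul hT _ one_mem' hw, T_one hT hw]
    rw [← hudef]; ring
  have hR : T ((NAq3 + (-a) • NAq2) * (NAq2 * dslope f a)) w = 0 := by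
    rw [T_mul hT hm2 hm3 hw, T_add hT q3_mem (smul_mem' _ q2_mem) hw,
      T_smul hT _ q2_mem hw, ← hudef, ← hvdef]
    have hau : a * u = v := by rw [hadef]; field_simp
    have : v + -a * u = 0 := by rw [neg_mul, hau]; ring
    rw [this, zero_mul]
  rw [hL, hR] at hTeq
  rcases mul_eq_zero.mp hTeq with h | h
  · exact absurd h hu
  rcases mul_eq_zero.mp h with h | h
  · exact absurd h hu
  · linear_combination h

end KeyLem

open Classical in
def Sinv (T : (ℂ → ℂ) → (ℂ → ℂ)) : (ℂ → ℂ) → (ℂ → ℂ) := fun g =>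
  if h : ∃ f ∈ Hinf1, Set.EqOn (T f) g D then h.choose else 0

section SinvLem

variable {T : (ℂ → ℂ) → (ℂ → ℂ)} (hT : IsAlgAutOn Hinf1 T)
include hT

lemma Sinv_mem {g : ℂ → ℂ} (hg : g ∈ Hinf1) : Sinv T g ∈ Hinf1 := by
  have h : ∃ f ∈ Hinf1, Set.EqOn (T f) g D := hT.2.2.2.2.2.2 g hg
  unfold Sinv
  rw [dif_pos h]
  exact h.choose_spec.1

lemma T_Sinv {g : ℂ → ℂ} (hg : g ∈ Hinf1) : Set.EqOn (T (Sinv T g)) g D := by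
  have h : ∃ f ∈ Hinf1, Set.EqOn (T f) g D := hT.2.2.2.2.2.2 g hg
  unfold Sinv
  rw [dif_pos h]
  exact h.choose_spec.2

lemma Sinv_congr {g g' : ℂ → ℂ} (hg : g ∈ Hinf1) (hg' : g' ∈ Hinf1)
    (he : Set.EqOn g g' D) : Set.EqOn (Sinv T g) (Sinv T g') D := by
  apply hT.2.2.2.2.2.1 _ (Sinv_mem hT hg) _ (Sinv_mem hT hg')
  exact ((T_Sinv hT hg).trans he).trans (T_Sinv hT hg').symm

lemma Sinv_isAut : IsAlgAutOn Hinf1 (Sinv T) := by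
  refine ⟨fun g hg => Sinv_mem hT hg, fun g hg g' hg' he => Sinv_congr hT hg hg' he,
    ?_, ?_, ?_, ?_, ?_⟩
  · intro g hg g' hg'
    apply hT.2.2.2.2.2.1 _ (Sinv_mem hT (add_mem' hg hg'))
      _ (add_mem' (Sinv_mem hT hg) (Sinv_mem hT hg'))
    intro z hz
    have h1 : T (Sinv T (g + g')) z = g z + g' z := by
      have := T_Sinv hT (add_mem' hg hg') hz; simpa using this
    have h2 : T (Sinv T g + Sinv T g') z = g z + g' z := by
      rw [T_add hT (Sinv_mem hT hg) (Sinv_mem hT hg') hz, T_Sinv hT hg hz, T_Sinv hT hg' hz]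
    rw [h1, h2]
  · intro c g hg
    apply hT.2.2.2.2.2.1 _ (Sinv_mem hT (smul_mem' c hg)) _ (smul_mem' c (Sinv_mem hT hg))
    intro z hz
    have h1 : T (Sinv T (c • g)) z = c * g z := by
      have := T_Sinv hT (smul_mem' c hg) hz; simpa using this
    have h2 : T (c • Sinv T g) z = c * g z := by
      rw [T_smul hT c (Sinv_mem hT hg) hz, T_Sinv hT hg hz]
    rw [h1, h2]
  · intro g hg g' hg'
    apply hT.2.2.2.2.2.1 _ (Sinv_mem hT (mul_mem' hg hg'))
      _ (mul_mem' (Sinv_mem hT hg) (Sinv_mem hT hg'))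
    intro z hz
    have h1 : T (Sinv T (g * g')) z = g z * g' z := by
      have := T_Sinv hT (mul_mem' hg hg') hz; simpa using this
    have h2 : T (Sinv T g * Sinv T g') z = g z * g' z := by
      rw [T_mul hT (Sinv_mem hT hg) (Sinv_mem hT hg') hz, T_Sinv hT hg hz, T_Sinv hT hg' hz]
    rw [h1, h2]
  · intro g hg g' hg' he
    have h1 : Set.EqOn (T (Sinv T g)) (T (Sinv T g')) D := by
      apply hT.2.1 _ (Sinv_mem hT hg) _ (Sinv_mem hT hg') he
    exact ((T_Sinv hT hg).symm.trans h1).trans (T_Sinv hT hg')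
  · intro f hf
    refine ⟨T f, T_mem hT hf, ?_⟩
    apply hT.2.2.2.2.2.1 _ (Sinv_mem hT (T_mem hT hf)) _ hf
    exact T_Sinv hT (T_mem hT hf)

end SinvLem

def hatf (u v : ℂ → ℂ) : ℂ → ℂ := fun z => if u z = 0 then 0 else v z / u z

section HatLem

variable {u v : ℂ → ℂ}

lemma hat_sq (hrel : ∀ z ∈ D, (v z) ^ 2 = (u z) ^ 3) {z : ℂ} (hz : z ∈ D) :
    (hatf u v z) ^ 2 = u z := by
  unfold hatf
  by_cases h : u z = 0
  · rw [if_pos h, h]; ring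
  · rw [if_neg h]
    have h1 : (v z / u z) ^ 2 * (u z) ^ 2 = v z ^ 2 := by field_simp
    have h2 : (v z / u z) ^ 2 * (u z) ^ 2 = u z * (u z) ^ 2 := by
      rw [h1, hrel z hz]; ring
    exact mul_right_cancel₀ (pow_ne_zero 2 h) h2

lemma hat_cube (hrel : ∀ z ∈ D, (v z) ^ 2 = (u z) ^ 3) {z : ℂ} (hz : z ∈ D) :
    (hatf u v z) ^ 3 = v z := by
  unfold hatf
  by_cases h : u z = 0
  · rw [if_pos h]
    have : v z ^ 2 = 0 := by rw [hrel z hz, h]; ring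
    have := pow_eq_zero_iff (n := 2) (by norm_num) |>.mp this
    rw [this]; ring
  · rw [if_neg h]
    have h1 : (v z / u z) ^ 3 * (u z) ^ 3 = v z ^ 3 := by field_simp
    have h2 : (v z / u z) ^ 3 * (u z) ^ 3 = v z * (u z) ^ 3 := by
      rw [h1]
      calc v z ^ 3 = v z * v z ^ 2 := by ring
        _ = v z * u z ^ 3 := by rw [hrel z hz]
    exact mul_right_cancel₀ (pow_ne_zero 3 h) h2

lemma hat_abs_sq (hrel : ∀ z ∈ D, (v z) ^ 2 = (u z) ^ 3) {z : ℂ} (hz : z ∈ D) :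
    (Complex.abs (hatf u v z)) ^ 2 = Complex.abs (u z) := by
  rw [← map_pow, hat_sq hrel hz]

lemma hat_lt (hrel : ∀ z ∈ D, (v z) ^ 2 = (u z) ^ 3)
    (hlt : ∀ z ∈ D, Complex.abs (u z) < 1) {z : ℂ} (hz : z ∈ D) :
    Complex.abs (hatf u v z) < 1 := by
  have h1 := hat_abs_sq hrel hz
  have h2 := hlt z hz
  nlinarith [Complex.abs.nonneg (hatf u v z)]

lemma hat_mem_D (hrel : ∀ z ∈ D, (v z) ^ 2 = (u z) ^ 3)
    (hlt : ∀ z ∈ D, Complex.abs (u z) < 1) {z : ℂ} (hz : z ∈ D) :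
    hatf u v z ∈ D := mem_D.2 (hat_lt hrel hlt hz)

lemma u_iso (hu : DifferentiableOn ℂ u D) (hne : ¬ Set.EqOn u 0 D) {z₀ : ℂ} (hz₀ : z₀ ∈ D) :
    ∀ᶠ z in nhdsWithin z₀ {z₀}ᶜ, u z ≠ 0 := by
  have han : AnalyticOnNhd ℂ u D := hu.analyticOnNhd D_open
  rcases (han z₀ hz₀).eventually_eq_zero_or_eventually_ne_zero with h | h
  · exfalso
    apply hne
    exact han.eqOn_zero_of_preconnected_of_eventuallyEq_zero D_conn hz₀ h
  · exact h

lemma hat_diffAt_ne (hu : DifferentiableOn ℂ u D) (hv : DifferentiableOn ℂ v D)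
    {z₀ : ℂ} (hz₀ : z₀ ∈ D) (hne : u z₀ ≠ 0) : DifferentiableAt ℂ (hatf u v) z₀ := by
  have hO : IsOpen (D ∩ u ⁻¹' {0}ᶜ) :=
    hu.continuousOn.isOpen_inter_preimage D_open isOpen_compl_singleton
  have hdiv : DifferentiableAt ℂ (fun z => v z / u z) z₀ :=
    (hv.differentiableAt (D_open.mem_nhds hz₀)).div
      (hu.differentiableAt (D_open.mem_nhds hz₀)) hne
  have hmem : D ∩ u ⁻¹' {0}ᶜ ∈ nhds z₀ := hO.mem_nhds ⟨hz₀, hne⟩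
  have heq : hatf u v =ᶠ[nhds z₀] fun z => v z / u z := by
    filter_upwards [hmem] with z hzmem
    unfold hatf
    rw [if_neg (by simpa using hzmem.2)]
  exact (Filter.EventuallyEq.differentiableAt_iff heq).mpr hdiv

lemma hat_diffAt (hu : DifferentiableOn ℂ u D) (hv : DifferentiableOn ℂ v D)
    (hrel : ∀ z ∈ D, (v z) ^ 2 = (u z) ^ 3) (hne : ¬ Set.EqOn u 0 D)
    {z₀ : ℂ} (hz₀ : z₀ ∈ D) : DifferentiableAt ℂ (hatf u v) z₀ := by
  by_cases h0 : u z₀ ≠ 0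
  · exact hat_diffAt_ne hu hv hz₀ h0
  push_neg at h0
  have hd : ∀ᶠ z in nhdsWithin z₀ {z₀}ᶜ, DifferentiableAt ℂ (hatf u v) z := by
    have hDev : ∀ᶠ z in nhds z₀, z ∈ D := D_open.mem_nhds hz₀
    filter_upwards [u_iso hu hne hz₀, hDev.filter_mono nhdsWithin_le_nhds] with z h1 h2
    exact hat_diffAt_ne hu hv h2 h1
  have hc : ContinuousAt (hatf u v) z₀ := by
    have hval : hatf u v z₀ = 0 := by unfold hatf; rw [if_pos h0]
    rw [ContinuousAt, hval]
    refine squeeze_zero_norm' (a := fun z => Real.sqrt (Complex.abs (u z))) ?_ ?_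
    · filter_upwards [D_open.mem_nhds hz₀] with z hzD
      have h1 : (Complex.abs (hatf u v z)) ^ 2 = Complex.abs (u z) := hat_abs_sq hrel hzD
      have h2 : Real.sqrt (Complex.abs (u z)) = Complex.abs (hatf u v z) := by
        rw [← h1, Real.sqrt_sq (Complex.abs.nonneg _)]
      rw [Complex.norm_eq_abs, h2]
    · have hcu : ContinuousAt u z₀ := (hu.differentiableAt (D_open.mem_nhds hz₀)).continuousAt
      have : ContinuousAt (fun z => Real.sqrt (Complex.abs (u z))) z₀ :=
        Real.continuous_sqrt.continuousAt.comp (Complex.continuous_abs.continuousAt.comp hcu)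
      have hlim := this.tendsto
      rw [h0] at hlim
      simpa using hlim
  exact (Complex.analyticAt_of_differentiable_on_punctured_nhds_of_continuousAt hd hc).differentiableAt

end HatLem

lemma eq_of_sq_cube {x w : ℂ} (h2 : x ^ 2 = w ^ 2) (h3 : x ^ 3 = w ^ 3) : x = w := by
  by_cases hw : w = 0
  · rw [hw] at h2 ⊢
    have : x ^ 2 = 0 := by rw [h2]; ring
    exact pow_eq_zero_iff (n := 2) (by norm_num) |>.mp this
  · have hx2 : x ^ 2 ≠ 0 := by rw [h2]; exact pow_ne_zero 2 hw
    have h : x * x ^ 2 = w * x ^ 2 := by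
      calc x * x ^ 2 = x ^ 3 := by ring
        _ = w ^ 3 := h3
        _ = w * w ^ 2 := by ring
        _ = w * x ^ 2 := by rw [h2]
    exact mul_right_cancel₀ hx2 h

section ExtLem

variable {T : (ℂ → ℂ) → (ℂ → ℂ)} (hT : IsAlgAutOn Hinf1 T)
include hT

lemma Tq2_ne_zero : ¬ Set.EqOn (T NAq2) 0 D := by
  intro h
  have h2 : Set.EqOn (T NAq2) (T 0) D := by
    intro z hz
    rw [h hz]
    exact (T_zero hT hz).symm
  have h3 := hT.2.2.2.2.2.1 NAq2 q2_mem 0 zero_mem' h2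
  have h4 := h3 (show (1/2 : ℂ) ∈ D by rw [mem_D, ← Complex.norm_eq_abs]; norm_num)
  simp only [NAq2, Pi.zero_apply] at h4
  norm_num at h4

lemma key_ext {f : ℂ → ℂ} (hf : f ∈ Hinf1) {w : ℂ} (hw : w ∈ D) :
    T f w = f (hatf (T NAq2) (T NAq3) w) := by
  have hu1 : T NAq2 ∈ Hinf1 := T_mem hT q2_mem
  have hv1 : T NAq3 ∈ Hinf1 := T_mem hT q3_mem
  have hrel : ∀ z ∈ D, (T NAq3 z) ^ 2 = (T NAq2 z) ^ 3 := fun z hz => T_q3_sq hT hz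
  have hlt : ∀ z ∈ D, Complex.abs (T NAq2 z) < 1 := fun z hz => T_q2_abs_lt hT hz
  by_cases h0 : T NAq2 w = 0
  · have hne : ¬ Set.EqOn (T NAq2) 0 D := Tq2_ne_zero hT
    have hatd : DifferentiableAt ℂ (hatf (T NAq2) (T NAq3)) w :=
      hat_diffAt hu1.1.1 hv1.1.1 hrel hne hw
    have hmemD : hatf (T NAq2) (T NAq3) w ∈ D := hat_mem_D hrel hlt hw
    have t1 : Tendsto (T f) (nhdsWithin w {w}ᶜ) (nhds (T f w)) :=
      (Hinf1.diffAt (T_mem hT hf) hw).continuousAt.tendsto.mono_left nhdsWithin_le_nhds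
    have t2 : Tendsto (fun z => f (hatf (T NAq2) (T NAq3) z)) (nhdsWithin w {w}ᶜ)
        (nhds (f (hatf (T NAq2) (T NAq3) w))) := by
      have hcf : ContinuousAt f (hatf (T NAq2) (T NAq3) w) :=
        (Hinf1.diffAt hf hmemD).continuousAt
      exact (hcf.comp hatd.continuousAt).tendsto.mono_left nhdsWithin_le_nhds
    have he : ∀ᶠ z in nhdsWithin w {w}ᶜ, T f z = f (hatf (T NAq2) (T NAq3) z) := by
      have hDev : ∀ᶠ z in nhds w, z ∈ D := D_open.mem_nhds hw
      filter_upwards [u_iso hu1.1.1 hne hw, hDev.filter_mono nhdsWithin_le_nhds] with z h1 h2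
      rw [key_eval hT h2 h1 hf]
      congr 1
      unfold hatf
      rw [if_neg h1]
    exact tendsto_nhds_unique_of_eventuallyEq t1 t2 he
  · rw [key_eval hT hw h0 hf]
    congr 1
    unfold hatf
    rw [if_neg h0]

end ExtLem

lemma forward_dir {T : (ℂ → ℂ) → (ℂ → ℂ)} (hT : IsAlgAutOn Hinf1 T) :
    ∃ θ : ℝ, ∀ f ∈ Hinf1, ∀ z ∈ D, T f z = f (Complex.exp ((θ : ℂ) * Complex.I) * z) := by
  have hS : IsAlgAutOn Hinf1 (Sinv T) := Sinv_isAut hT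
  set A1 : ℂ → ℂ := hatf (T NAq2) (T NAq3) with hA1def
  set B1 : ℂ → ℂ := hatf (Sinv T NAq2) (Sinv T NAq3) with hB1def
  have huT : T NAq2 ∈ Hinf1 := T_mem hT q2_mem
  have hvT : T NAq3 ∈ Hinf1 := T_mem hT q3_mem
  have huS : Sinv T NAq2 ∈ Hinf1 := Sinv_mem hT q2_mem
  have hvS : Sinv T NAq3 ∈ Hinf1 := Sinv_mem hT q3_mem
  have hrelT : ∀ z ∈ D, (T NAq3 z) ^ 2 = (T NAq2 z) ^ 3 := fun z hz => T_q3_sq hT hz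
  have hrelS : ∀ z ∈ D, (Sinv T NAq3 z) ^ 2 = (Sinv T NAq2 z) ^ 3 := fun z hz => T_q3_sq hS hz
  have hltT : ∀ z ∈ D, Complex.abs (T NAq2 z) < 1 := fun z hz => T_q2_abs_lt hT hz
  have hltS : ∀ z ∈ D, Complex.abs (Sinv T NAq2 z) < 1 := fun z hz => T_q2_abs_lt hS hz
  have hneT : ¬ Set.EqOn (T NAq2) 0 D := Tq2_ne_zero hT
  have hneS : ¬ Set.EqOn (Sinv T NAq2) 0 D := Tq2_ne_zero hS
  have hA1diff : ∀ z ∈ D, DifferentiableAt ℂ A1 z :=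
    fun z hz => hat_diffAt huT.1.1 hvT.1.1 hrelT hneT hz
  have hB1diff : ∀ z ∈ D, DifferentiableAt ℂ B1 z :=
    fun z hz => hat_diffAt huS.1.1 hvS.1.1 hrelS hneS hz
  have hA1D : ∀ z ∈ D, A1 z ∈ D := fun z hz => hat_mem_D hrelT hltT hz
  have hB1D : ∀ z ∈ D, B1 z ∈ D := fun z hz => hat_mem_D hrelS hltS hz
  -- p ∘ A1 = q2, q ∘ A1 = q3
  have hpA : ∀ w ∈ D, Sinv T NAq2 (A1 w) = w ^ 2 := by
    intro w hw
    have h1 := key_ext hT (Sinv_mem hT q2_mem) hw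
    have h2 : T (Sinv T NAq2) w = NAq2 w := T_Sinv hT q2_mem hw
    rw [← h1]
    exact h2
  have hqA : ∀ w ∈ D, Sinv T NAq3 (A1 w) = w ^ 3 := by
    intro w hw
    have h1 := key_ext hT (Sinv_mem hT q3_mem) hw
    have h2 : T (Sinv T NAq3) w = NAq3 w := T_Sinv hT q3_mem hw
    rw [← h1]
    exact h2
  -- u ∘ B1 = q2, v ∘ B1 = q3
  have hSu : Set.EqOn (Sinv T (T NAq2)) NAq2 D := by
    apply hT.2.2.2.2.2.1 _ (Sinv_mem hT huT) _ q2_mem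
    exact T_Sinv hT huT
  have hSv : Set.EqOn (Sinv T (T NAq3)) NAq3 D := by
    apply hT.2.2.2.2.2.1 _ (Sinv_mem hT hvT) _ q3_mem
    exact T_Sinv hT hvT
  have huB : ∀ w ∈ D, T NAq2 (B1 w) = w ^ 2 := by
    intro w hw
    have h1 := key_ext hS huT hw
    rw [← h1]
    exact hSu hw
  have hvB : ∀ w ∈ D, T NAq3 (B1 w) = w ^ 3 := by
    intro w hw
    have h1 := key_ext hS hvT hw
    rw [← h1]
    exact hSv hw
  -- B1 ∘ A1 = id, A1 ∘ B1 = id on D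
  have hBA : ∀ w ∈ D, B1 (A1 w) = w := by
    intro w hw
    have hAw := hA1D w hw
    have h2 : (B1 (A1 w)) ^ 2 = w ^ 2 := by
      rw [hB1def, hat_sq hrelS hAw]
      exact hpA w hw
    have h3 : (B1 (A1 w)) ^ 3 = w ^ 3 := by
      rw [hB1def, hat_cube hrelS hAw]
      exact hqA w hw
    exact eq_of_sq_cube h2 h3
  -- A1 0 = 0
  have hBA_ev : (fun z => B1 (A1 z)) =ᶠ[nhds 0] id := by
    filter_upwards [D_open.mem_nhds zero_mem_D] with z hz
    exact hBA z hz
  have hA1has : HasDerivAt A1 (deriv A1 0) 0 := (hA1diff 0 zero_mem_D).hasDerivAt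
  have hB1has : HasDerivAt B1 (deriv B1 (A1 0)) (A1 0) :=
    (hB1diff (A1 0) (hA1D 0 zero_mem_D)).hasDerivAt
  have hcomp : HasDerivAt (fun z => B1 (A1 z)) (deriv B1 (A1 0) * deriv A1 0) 0 :=
    HasDerivAt.comp 0 hB1has hA1has
  have hchain : deriv B1 (A1 0) * deriv A1 0 = 1 := by
    have h1 := hcomp.deriv
    rw [hBA_ev.deriv_eq] at h1
    rw [← h1, deriv_id]
  have hdA : deriv A1 0 ≠ 0 := by
    intro h
    rw [h, mul_zero] at hchain
    exact zero_ne_one hchain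
  have hA10 : A1 0 = 0 := by
    have hev : T NAq2 =ᶠ[nhds 0] fun z => (A1 z) ^ 2 := by
      filter_upwards [D_open.mem_nhds zero_mem_D] with z hz
      rw [hA1def, hat_sq hrelT hz]
    have hpow : HasDerivAt (fun z => (A1 z) ^ 2) ((2 : ℕ) * A1 0 ^ 1 * deriv A1 0) 0 :=
      hA1has.pow 2
    have h1 : deriv (T NAq2) 0 = (2 : ℕ) * A1 0 ^ 1 * deriv A1 0 := by
      rw [hev.deriv_eq, hpow.deriv]
    rw [huT.2] at h1
    have h2 : A1 0 * deriv A1 0 = 0 := by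
      have := h1.symm
      push_cast at this
      linear_combination this / 2
    rcases mul_eq_zero.mp h2 with h | h
    · exact h
    · exact absurd h hdA
  have hB10 : B1 0 = 0 := by
    have := hBA 0 zero_mem_D
    rw [hA10] at this
    exact this
  -- Schwarz
  have hA1diffOn : DifferentiableOn ℂ A1 D := fun z hz =>
    (hA1diff z hz).differentiableWithinAt
  have hB1diffOn : DifferentiableOn ℂ B1 D := fun z hz =>
    (hB1diff z hz).differentiableWithinAt
  have hmapsA : MapsTo A1 (ball (0:ℂ) 1) (ball (0:ℂ) 1) := fun z hz => hA1D z hz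
  have hmapsB : MapsTo B1 (ball (0:ℂ) 1) (ball (0:ℂ) 1) := fun z hz => hB1D z hz
  have hSchA : ∀ z ∈ D, Complex.abs (A1 z) ≤ Complex.abs z := fun z hz =>
    Complex.abs_le_abs_of_mapsTo_ball_self hA1diffOn hmapsA hA10 (mem_D.1 hz)
  have hSchB : ∀ z ∈ D, Complex.abs (B1 z) ≤ Complex.abs z := fun z hz =>
    Complex.abs_le_abs_of_mapsTo_ball_self hB1diffOn hmapsB hB10 (mem_D.1 hz)
  have habs_eq : ∀ z ∈ D, Complex.abs (A1 z) = Complex.abs z := by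
    intro z hz
    refine le_antisymm (hSchA z hz) ?_
    have h1 : Complex.abs (B1 (A1 z)) ≤ Complex.abs (A1 z) := hSchB (A1 z) (hA1D z hz)
    rw [hBA z hz] at h1
    exact h1
  -- h := dslope A1 0 is constant of modulus one
  set h : ℂ → ℂ := dslope A1 0 with hhdef
  have hhdiff : DifferentiableOn ℂ h D :=
    (differentiableOn_dslope (D_open.mem_nhds zero_mem_D)).mpr hA1diffOn
  have hhval : ∀ z : ℂ, z ≠ 0 → h z = A1 z / z := by
    intro z hz0
    rw [hhdef, dslope_of_ne A1 hz0, slope_def_field, hA10, sub_zero, sub_zero]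
  have hh1 : ∀ z ∈ D, z ≠ 0 → Complex.abs (h z) = 1 := by
    intro z hz hz0
    rw [hhval z hz0, map_div₀, habs_eq z hz]
    exact div_self (Complex.abs.ne_zero hz0)
  have hh0 : Complex.abs (h 0) = 1 := by
    have hcont : ContinuousAt h 0 :=
      (hhdiff.differentiableAt (D_open.mem_nhds zero_mem_D)).continuousAt
    have t1 : Tendsto (fun z => Complex.abs (h z)) (nhdsWithin 0 {(0:ℂ)}ᶜ)
        (nhds (Complex.abs (h 0))) :=
      (Complex.continuous_abs.continuousAt.comp hcont).tendsto.mono_left nhdsWithin_le_nhds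
    have t2 : Tendsto (fun _ : ℂ => (1:ℝ)) (nhdsWithin 0 {(0:ℂ)}ᶜ) (nhds 1) := tendsto_const_nhds
    have he : ∀ᶠ z in nhdsWithin 0 {(0:ℂ)}ᶜ, Complex.abs (h z) = 1 := by
      have hDev : ∀ᶠ z in nhds (0:ℂ), z ∈ D := D_open.mem_nhds zero_mem_D
      filter_upwards [hDev.filter_mono nhdsWithin_le_nhds, self_mem_nhdsWithin] with z h1 h2
      exact hh1 z h1 h2
    exact tendsto_nhds_unique_of_eventuallyEq t1 t2 he
  have hmax : IsMaxOn (norm ∘ h) D 0 := by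
    intro z hz
    simp only [Function.comp_apply, Complex.norm_eq_abs, Set.mem_setOf_eq, hh0]
    by_cases hz0 : z = 0
    · rw [hz0, hh0]
    · rw [hh1 z hz hz0]
  have hconst := Complex.eqOn_of_isPreconnected_of_isMaxOn_norm D_conn D_open hhdiff
    zero_mem_D hmax
  set c : ℂ := h 0 with hcdef
  have hA1c : ∀ z ∈ D, A1 z = c * z := by
    intro z hz
    by_cases hz0 : z = 0
    · rw [hz0, hA10, mul_zero]
    · have h1 : h z = c := hconst hz
      rw [hhval z hz0] at h1
      field_simp at h1
      linear_combination h1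
  refine ⟨Complex.arg c, ?_⟩
  have hexp : Complex.exp ((Complex.arg c : ℂ) * Complex.I) = c := by
    have := Complex.abs_mul_exp_arg_mul_I c
    rw [hh0] at this
    simpa using this
  intro f hf z hz
  rw [key_ext hT hf hz, ← hA1def, hA1c z hz, hexp]

lemma comp_rot_mem {f : ℂ → ℂ} (hf : f ∈ Hinf1) {c : ℂ} (habs : Complex.abs c = 1) :
    (fun z => f (c * z)) ∈ Hinf1 := by
  have hrotD : ∀ z ∈ D, c * z ∈ D := by
    intro z hz
    rw [mem_D, map_mul, habs, one_mul]
    exact mem_D.1 hz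
  obtain ⟨⟨hfd, C, hC⟩, hf0⟩ := hf
  refine ⟨⟨?_, C, fun z hz => hC _ (hrotD z hz)⟩, ?_⟩
  · intro z hz
    have h1 : DifferentiableAt ℂ f (c * z) :=
      hfd.differentiableAt (D_open.mem_nhds (hrotD z hz))
    have h2 : DifferentiableAt ℂ (fun z : ℂ => c * z) z := (differentiableAt_id.const_mul c)
    exact (h1.comp z h2).differentiableWithinAt
  · have hc0 : c * 0 = 0 := mul_zero c
    have h1 : HasDerivAt f (deriv f 0) (c * 0) := by
      rw [hc0]
      exact (hfd.differentiableAt (D_open.mem_nhds zero_mem_D)).hasDerivAt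
    have h2 : HasDerivAt (fun z : ℂ => c * z) c 0 := by
      simpa using (hasDerivAt_id (0:ℂ)).const_mul c
    have h3 : HasDerivAt (fun z => f (c * z)) (deriv f 0 * c) 0 := HasDerivAt.comp 0 h1 h2
    rw [h3.deriv, hf0, zero_mul]

lemma backward_dir {T : (ℂ → ℂ) → (ℂ → ℂ)} {θ : ℝ}
    (hrot : ∀ f ∈ Hinf1, ∀ z ∈ D, T f z = f (Complex.exp ((θ : ℂ) * Complex.I) * z)) :
    IsAlgAutOn Hinf1 T := by
  set e : ℂ := Complex.exp ((θ : ℂ) * Complex.I) with hedef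
  have habse : Complex.abs e = 1 := Complex.abs_exp_ofReal_mul_I θ
  have habse' : Complex.abs e⁻¹ = 1 := by rw [map_inv₀, habse]; norm_num
  have he0 : e ≠ 0 := by
    intro h; rw [h] at habse; simp at habse
  have hrotD : ∀ z ∈ D, e * z ∈ D := by
    intro z hz
    rw [mem_D, map_mul, habse, one_mul]
    exact mem_D.1 hz
  have hrotD' : ∀ z ∈ D, e⁻¹ * z ∈ D := by
    intro z hz
    rw [mem_D, map_mul, habse', one_mul]
    exact mem_D.1 hz
  have hTmem : ∀ f ∈ Hinf1, T f ∈ Hinf1 := by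
    intro f hf
    have hg : (fun z => f (e * z)) ∈ Hinf1 := comp_rot_mem hf habse
    have heq : Set.EqOn (T f) (fun z => f (e * z)) D := fun z hz => hrot f hf z hz
    obtain ⟨⟨hgd, C, hC⟩, hg0⟩ := hg
    refine ⟨⟨hgd.congr heq, C, fun z hz => by rw [heq hz]; exact hC z hz⟩, ?_⟩
    have hev : T f =ᶠ[nhds 0] fun z => f (e * z) := by
      filter_upwards [D_open.mem_nhds zero_mem_D] with z hz
      exact heq hz
    rw [hev.deriv_eq]
    exact hg0
  refine ⟨hTmem, ?_, ?_, ?_, ?_, ?_, ?_⟩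
  · intro f hf g hg he' z hz
    rw [hrot f hf z hz, hrot g hg z hz]
    exact he' (hrotD z hz)
  · intro f hf g hg z hz
    rw [hrot (f + g) (add_mem' hf hg) z hz, Pi.add_apply, Pi.add_apply,
      hrot f hf z hz, hrot g hg z hz]
  · intro c f hf z hz
    rw [hrot (c • f) (smul_mem' c hf) z hz, Pi.smul_apply, Pi.smul_apply,
      hrot f hf z hz]
  · intro f hf g hg z hz
    rw [hrot (f * g) (mul_mem' hf hg) z hz, Pi.mul_apply, Pi.mul_apply,
      hrot f hf z hz, hrot g hg z hz]
  · intro f hf g hg he' w hw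
    have hw' : e⁻¹ * w ∈ D := hrotD' w hw
    have h1 : e * (e⁻¹ * w) = w := by field_simp
    have h2 := he' hw'
    rw [hrot f hf _ hw', hrot g hg _ hw', h1] at h2
    exact h2
  · intro g hg
    refine ⟨fun z => g (e⁻¹ * z), comp_rot_mem hg habse', ?_⟩
    intro z hz
    rw [hrot _ (comp_rot_mem hg habse') z hz]
    have h1 : e⁻¹ * (e * z) = z := by field_simp
    rw [h1]


/-- A map `T : H^∞_1(𝔻) → H^∞_1(𝔻)` on the Neil algebra is an automorphism if and only if it
is composition with a rotation: `(Tf)(z) = f(e^{iθ} z)`. -/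
theorem automorphism_of_Neil_algebra_iff (T : (ℂ → ℂ) → (ℂ → ℂ)) :
    IsAlgAutOn Hinf1 T ↔
      ∃ θ : ℝ, ∀ f ∈ Hinf1, ∀ z ∈ D, T f z = f (Complex.exp ((θ : ℂ) * Complex.I) * z) := by
  constructor
  · exact forward_dir
  · rintro ⟨θ, hrot⟩
    exact backward_dir hrot
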